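/- arXiv:1205.6359 — 2 statements merged into one kernel-verified Lean document; each statement's English description precedes it below -/
import Mathlib

section
/- For every MUL-tree (T, M, ψ) there exists a singly-labeled tree (T', M', ψ') whose label set M' contains M and such that every quartet in the information content I(T) also belongs to I(T'); in particular, the set of quartets I(T) is compatible (displayed by a single singly-labeled tree). -/
/-!
Relabel every leaf by itself, which makes the tree singly labeled, and send each label `m` to the
new label of one chosen leaf carrying `m`. If the edge `(u,v)` resolves `ab|cd`, then every leaf
labeled `a` lies on the `u`-side of the edge, in particular the chosen one; as labels are now
unique, its new label lies in `M_u^{uv}`. Hence the same edge resolves the image quartet.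
-/

open SimpleGraph

variable {V V' L L' : Type}

/-- Degree of a vertex, via `Set.ncard` of the neighbor set (no instances needed). -/
noncomputable def deg (G : SimpleGraph V) (v : V) : ℕ := (G.neighborSet v).ncard

/-- A leaf is a vertex of degree one. -/
def IsLeaf (G : SimpleGraph V) (v : V) : Prop := deg G v = 1

/-- The vertex set of the subtree `T_u^{uv}`: vertices reachable from `u`
after deleting the edge `(u,v)`. -/
def side (G : SimpleGraph V) (u v : V) : Set V :=
  {w | (G.deleteEdges {s(u, v)}).Reachable w u}

/-- Labels appearing on leaves of the `u`-side of the edge `(u,v)`. -/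
def sideLabels (G : SimpleGraph V) (ψ : V → L) (u v : V) : Set L :=
  {m | ∃ w, IsLeaf G w ∧ w ∈ side G u v ∧ ψ w = m}

/-- `M_u^{uv}`: labels appearing on leaves of `T_u^{uv}` but not of `T_v^{uv}`. -/
def Mside (G : SimpleGraph V) (ψ : V → L) (u v : V) : Set L :=
  sideLabels G ψ u v \ sideLabels G ψ v u

/-- `C^{uv}`: labels appearing on leaves of both sides of the edge `(u,v)`. -/
def Cside (G : SimpleGraph V) (ψ : V → L) (u v : V) : Set L :=
  sideLabels G ψ u v ∩ sideLabels G ψ v u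

/-- A quartet `ab|cd`: an unordered pair of unordered pairs of labels. -/
abbrev Quartet (L : Type) := Sym2 (Sym2 L)

/-- The edge `(u,v)` resolves the quartet `q = ab|cd` when `{a,b} ⊆ M_u^{uv}` and
`{c,d} ⊆ M_v^{uv}` (with `a,b,c,d` four distinct labels). -/
def Resolves (G : SimpleGraph V) (ψ : V → L) (u v : V) (q : Quartet L) : Prop :=
  G.Adj u v ∧ ∃ a b c d : L, a ≠ b ∧ c ≠ d ∧
    a ∈ Mside G ψ u v ∧ b ∈ Mside G ψ u v ∧
    c ∈ Mside G ψ v u ∧ d ∈ Mside G ψ v u ∧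
    q = s(s(a, b), s(c, d))

/-- `Δ(u,v)`: the set of quartets resolved by the edge `(u,v)`. -/
def Δ (G : SimpleGraph V) (ψ : V → L) (u v : V) : Set (Quartet L) :=
  {q | Resolves G ψ u v q}

/-- The information content `I(T)`: all quartets resolved by some edge. -/
def infoContent (G : SimpleGraph V) (ψ : V → L) : Set (Quartet L) :=
  {q | ∃ u v, Resolves G ψ u v q}

/-- The label set `M`: labels carried by the leaves. -/
def labelSet (G : SimpleGraph V) (ψ : V → L) : Set L :=
  {m | ∃ v, IsLeaf G v ∧ ψ v = m}

/-- Singly labeled: the labeling map is injective on leaves. -/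
def SinglyLabeled (G : SimpleGraph V) (ψ : V → L) : Prop :=
  ∀ v w, IsLeaf G v → IsLeaf G w → ψ v = ψ w → v = w

/-- A MUL-tree: a finite unrooted tree (encoded as the nontrivial connected component
of `G`; vertices outside `G.support` are unused isolated vertices) together with a
labeling `ψ` of its leaves, such that every internal (non-leaf) node has degree ≥ 3.
The label set `M` is `labelSet G ψ`, onto which `ψ` (restricted to leaves) is
automatically surjective. -/
structure MulTree (V L : Type) : Type where
  G : SimpleGraph V
  ψ : V → L
  fin : Finite V
  acyclic : G.IsAcyclic
  conn : ∀ u ∈ G.support, ∀ v ∈ G.support, G.Reachable u v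
  internal3 : ∀ v ∈ G.support, ¬ IsLeaf G v → 3 ≤ deg G v

/-- `y` lies on the (unique) path between `a` and `b`: `a,b` are connected and
every walk from `a` to `b` passes through `y`. -/
def OnPath (G : SimpleGraph V) (y a b : V) : Prop :=
  G.Reachable a b ∧ ∀ p : G.Walk a b, y ∈ p.support

/-- The edges `(u,v)` and `(w,x)` lie, in this order, on the path
`P_{u,x} = (u, v, …, w, x)` (possibly `v = w`). -/
def PathConfig (G : SimpleGraph V) (u v w x : V) : Prop :=
  G.Adj u v ∧ G.Adj w x ∧ OnPath G v u x ∧ OnPath G w v x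

/-- An internal edge: both endpoints are internal (non-leaf) nodes. -/
def InternalEdge (G : SimpleGraph V) (a b : V) : Prop :=
  G.Adj a b ∧ ¬ IsLeaf G a ∧ ¬ IsLeaf G b

/-- Contracting the edge `(a,b)`: identify `b` with `a` (the vertex `b` becomes
an unused isolated vertex). -/
def contractEdge (G : SimpleGraph V) (a b : V) : SimpleGraph V where
  Adj x y := x ≠ y ∧ x ≠ b ∧ y ≠ b ∧
    (G.Adj x y ∨ (x = a ∧ G.Adj b y) ∨ (y = a ∧ G.Adj x b))
  symm := by
    refine ⟨?_⟩
    rintro x y ⟨h1, h2, h3, h4 | ⟨hx, hy⟩ | ⟨hy, hx⟩⟩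
    · exact ⟨h1.symm, h3, h2, Or.inl h4.symm⟩
    · exact ⟨h1.symm, h3, h2, Or.inr (Or.inr ⟨hx, hy.symm⟩)⟩
    · exact ⟨h1.symm, h3, h2, Or.inr (Or.inl ⟨hy, hx.symm⟩)⟩
  loopless := ⟨fun x h => h.1 rfl⟩

/-- `PruneSpec G v₀ G'` : `G'` is the result of pruning the leaf `v₀` from `G`:
delete `v₀` (i.e. its unique edge); if as a result the neighbor `u` of `v₀`
becomes a degree-two node, additionally delete `u` and connect its former two
other neighbors by an edge. Deleted vertices become unused isolated vertices. -/
def PruneSpec (G : SimpleGraph V) (v₀ : V) (G' : SimpleGraph V) : Prop :=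
  ∃ u, G.neighborSet v₀ = {u} ∧
    ((deg G u ≠ 3 ∧ G' = G.deleteEdges {s(u, v₀)}) ∨
     (deg G u = 3 ∧ ∃ p q, p ≠ q ∧ p ≠ v₀ ∧ q ≠ v₀ ∧
        G.neighborSet u = {v₀, p, q} ∧
        G' = G.deleteEdges {s(u, v₀), s(u, p), s(u, q)} ⊔ fromEdgeSet {s(p, q)}))

/-- A leaf is prunable if pruning it leaves the information content unchanged. -/
def Prunable (G : SimpleGraph V) (ψ : V → L) (v₀ : V) : Prop :=
  IsLeaf G v₀ ∧ ∃ G', PruneSpec G v₀ G' ∧ infoContent G' ψ = infoContent G ψ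

/-- An internal edge is contractible if contracting it leaves the information
content unchanged. -/
def Contractible (G : SimpleGraph V) (ψ : V → L) (a b : V) : Prop :=
  InternalEdge G a b ∧ infoContent (contractEdge G a b) ψ = infoContent G ψ

/-- Maximally reduced: no prunable leaf and no contractible internal edge. -/
def MaximallyReduced (G : SimpleGraph V) (ψ : V → L) : Prop :=
  (∀ v, ¬ Prunable G ψ v) ∧ (∀ a b, ¬ Contractible G ψ a b)

/-- One reduction step: prune a prunable leaf or contract a contractible
internal edge. -/
def ReduceStep (ψ : V → L) (G G' : SimpleGraph V) : Prop :=
  (∃ v₀, Prunable G ψ v₀ ∧ PruneSpec G v₀ G') ∨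
  (∃ a b, Contractible G ψ a b ∧ G' = contractEdge G a b)

/-- `H` is a maximally reduced form (MRF) of `G`: obtained from `G` by repeatedly
pruning prunable leaves and contracting contractible internal edges, until
neither operation is possible. -/
def IsMRF (ψ : V → L) (G H : SimpleGraph V) : Prop :=
  Relation.ReflTransGen (ReduceStep ψ) G H ∧ MaximallyReduced H ψ

/-- Label-preserving isomorphism of (leaf-labeled) trees: a graph isomorphism
between the supports mapping leaves to leaves and preserving leaf labels. -/
def LIso (G : SimpleGraph V) (ψ : V → L) (G' : SimpleGraph V') (ψ' : V' → L) : Prop :=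
  ∃ f : G.support ≃ G'.support,
    (∀ x y : G.support, G'.Adj (f x).1 (f y).1 ↔ G.Adj x.1 y.1) ∧
    (∀ x : G.support, IsLeaf G x.1 → IsLeaf G' (f x).1 ∧ ψ' (f x).1 = ψ x.1)

/-- The set of internal edges of `G`, as unordered pairs. -/
def internalEdgeSet (G : SimpleGraph V) : Set (Sym2 V) :=
  {e | ∃ a b, e = s(a, b) ∧ InternalEdge G a b}

/-- The subtree `T_z^{yz}` branches out from the path `P_{u,x}` :
`y` is an interior vertex of the path and `z` is off the path. -/
def BranchesOut (G : SimpleGraph V) (u x y z : V) : Prop :=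
  G.Adj y z ∧ OnPath G y u x ∧ y ≠ u ∧ y ≠ x ∧ ¬ OnPath G z u x

/-- Vertices of the minimal subtree spanning all leaves labeled `ℓ`. -/
def spanVerts (G : SimpleGraph V) (ψ : V → L) (ℓ : L) : Set V :=
  {p | ∃ c d, IsLeaf G c ∧ IsLeaf G d ∧ ψ c = ℓ ∧ ψ d = ℓ ∧ OnPath G p c d}

/-- Degree of `y` within the subtree induced on the vertex set `S`. -/
noncomputable def degIn (G : SimpleGraph V) (S : Set V) (y : V) : ℕ :=
  (G.neighborSet y ∩ S).ncard

/-- One step of deleting a leaf labeled `ℓ` (by pruning, with suppression). -/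
def PruneLabelStep (ψ : V → L) (ℓ : L) (G G' : SimpleGraph V) : Prop :=
  ∃ v₀, IsLeaf G v₀ ∧ ψ v₀ = ℓ ∧ PruneSpec G v₀ G'


section Side

variable {G : SimpleGraph V} {ψ : V → L} {u v w : V}

lemma reachable_deleteEdges_or_of_reachable (h : G.Reachable w u) (v : V) :
    (G.deleteEdges {s(u, v)}).Reachable w u ∨ (G.deleteEdges {s(u, v)}).Reachable w v := by
  obtain ⟨p⟩ := h
  induction p with
  | nil => exact Or.inl .rfl
  | @cons x y u hxy _ ih =>
    by_cases he : s(x, y) = s(u, v)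
    · rcases Sym2.eq_iff.mp he with ⟨rfl, rfl⟩ | ⟨rfl, rfl⟩
      · exact Or.inl .rfl
      · exact Or.inr .rfl
    · have hxy' : (G.deleteEdges {s(u, v)}).Adj x y := (deleteEdges_adj ..).mpr ⟨hxy, he⟩
      exact ih.imp hxy'.reachable.trans hxy'.reachable.trans

lemma mem_side_or_mem_side_of_reachable (h : G.Reachable w u) :
    w ∈ side G u v ∨ w ∈ side G v u := by
  unfold side
  rw [Sym2.eq_swap (a := v)]
  exact reachable_deleteEdges_or_of_reachable h v

lemma notMem_side_swap (hG : G.IsAcyclic) (huv : G.Adj u v) (hw : w ∈ side G u v) :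
    w ∉ side G v u := by
  intro hw'
  have hbridge := isBridge_iff.mp (isAcyclic_iff_forall_adj_isBridge.mp hG huv)
  rw [side, Sym2.eq_swap] at hw'
  exact hbridge (hw.symm.trans hw')

lemma IsLeaf.mem_support (hw : IsLeaf G w) : w ∈ G.support := by
  obtain ⟨y, hy⟩ := Set.ncard_eq_one.mp hw
  exact ⟨y, by simp [← mem_neighborSet, hy]⟩

lemma Mside_subset_labelSet : Mside G ψ u v ⊆ labelSet G ψ := by
  rintro m ⟨⟨w, hw, -, rfl⟩, -⟩
  exact ⟨w, hw, rfl⟩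

lemma mem_side_of_mem_Mside (hconn : ∀ a ∈ G.support, ∀ b ∈ G.support, G.Reachable a b)
    (huv : G.Adj u v) (hw : IsLeaf G w) (hm : ψ w ∈ Mside G ψ u v) : w ∈ side G u v :=
  (mem_side_or_mem_side_of_reachable (hconn w hw.mem_support u ⟨v, huv⟩)).resolve_right
    fun hw' ↦ hm.2 ⟨w, hw, hw', rfl⟩

lemma mem_Mside_of_injective {φ : V → L'} (hφ : φ.Injective) (hG : G.IsAcyclic)
    (huv : G.Adj u v) (hw : IsLeaf G w) (hside : w ∈ side G u v) : φ w ∈ Mside G φ u v := by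
  refine ⟨⟨w, hw, hside, rfl⟩, ?_⟩
  rintro ⟨w', -, hw', hφw⟩
  exact notMem_side_swap hG huv hside (hφ hφw ▸ hw')

end Side

section Transfer

variable {G : SimpleGraph V} {ψ : V → L} {φ : V → L'} {g : L → L'} {u v : V}

def IsLeafRepresentative (G : SimpleGraph V) (ψ : V → L) (φ : V → L') (g : L → L') : Prop :=
  ∀ m ∈ labelSet G ψ, ∃ w, IsLeaf G w ∧ ψ w = m ∧ g m = φ w

lemma map_mem_Mside (hG : G.IsAcyclic)
    (hconn : ∀ a ∈ G.support, ∀ b ∈ G.support, G.Reachable a b) (hφ : φ.Injective)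
    (hg : IsLeafRepresentative G ψ φ g) (huv : G.Adj u v) {m : L} (hm : m ∈ Mside G ψ u v) :
    g m ∈ Mside G φ u v := by
  obtain ⟨w, hw, rfl, hgw⟩ := hg m (Mside_subset_labelSet hm)
  rw [hgw]
  exact mem_Mside_of_injective hφ hG huv hw (mem_side_of_mem_Mside hconn huv hw hm)

lemma IsLeafRepresentative.map_ne (hφ : φ.Injective) (hg : IsLeafRepresentative G ψ φ g)
    {a b : L} (ha : a ∈ labelSet G ψ) (hb : b ∈ labelSet G ψ) (hab : a ≠ b) : g a ≠ g b := by
  obtain ⟨w, -, rfl, hgw⟩ := hg a ha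
  obtain ⟨w', -, rfl, hgw'⟩ := hg b hb
  rw [hgw, hgw']
  exact hφ.ne (ne_of_apply_ne ψ hab)

lemma Resolves.map (hG : G.IsAcyclic)
    (hconn : ∀ a ∈ G.support, ∀ b ∈ G.support, G.Reachable a b) (hφ : φ.Injective)
    (hg : IsLeafRepresentative G ψ φ g) {q : Quartet L} (hq : Resolves G ψ u v q) :
    Resolves G φ u v (Sym2.map (Sym2.map g) q) := by
  obtain ⟨huv, a, b, c, d, hab, hcd, ha, hb, hc, hd, rfl⟩ := hq
  have hM {x y : V} {m : L} (hxy : G.Adj x y) (hm : m ∈ Mside G ψ x y) : g m ∈ Mside G φ x y :=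
    map_mem_Mside hG hconn hφ hg hxy hm
  refine ⟨huv, g a, g b, g c, g d, ?_, ?_, hM huv ha, hM huv hb, hM huv.symm hc,
    hM huv.symm hd, rfl⟩
  · exact hg.map_ne hφ (Mside_subset_labelSet ha) (Mside_subset_labelSet hb) hab
  · exact hg.map_ne hφ (Mside_subset_labelSet hc) (Mside_subset_labelSet hd) hcd

end Transfer

section LeafChoice

variable {G : SimpleGraph V} {ψ : V → L}

open Classical in
noncomputable def leafChoice (G : SimpleGraph V) (ψ : V → L) (m : L) : V ⊕ L :=
  if h : m ∈ labelSet G ψ then .inl h.choose else .inr m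

lemma leafChoice_leftInverse : (Sum.elim ψ id).LeftInverse (leafChoice G ψ) := by
  intro m
  unfold leafChoice
  split_ifs with h
  · exact h.choose_spec.2
  · rfl

lemma isLeafRepresentative_leafChoice : IsLeafRepresentative G ψ Sum.inl (leafChoice G ψ) :=
  fun _ hm ↦ ⟨_, hm.choose_spec.1, hm.choose_spec.2, dif_pos hm⟩

end LeafChoice

def MulTree.relabel (T : MulTree V L) (φ : V → L') : MulTree V L' :=
  { T with ψ := φ }

/-- For every MUL-tree `(T, M, ψ)` there exists a singly-labeled tree
`(T', M', ψ')` whose label set `M'` contains `M` and such that every quartet in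
`I(T)` also belongs to `I(T')`; in particular `I(T)` is compatible. -/
theorem stmt0 (T : MulTree V L) :
    ∃ (V' L' : Type) (T' : MulTree V' L') (f : L ↪ L'),
      SinglyLabeled T'.G T'.ψ ∧
      (∀ m ∈ labelSet T.G T.ψ, f m ∈ labelSet T'.G T'.ψ) ∧
      Sym2.map (Sym2.map ⇑f) '' infoContent T.G T.ψ ⊆ infoContent T'.G T'.ψ := by
  have hrep := isLeafRepresentative_leafChoice (G := T.G) (ψ := T.ψ)
  refine ⟨V, V ⊕ L, T.relabel Sum.inl, ⟨leafChoice T.G T.ψ, leafChoice_leftInverse.injective⟩,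
    fun _ _ _ _ h ↦ Sum.inl_injective h, fun m hm ↦ ?_, ?_⟩
  · obtain ⟨w, hw, -, hwm⟩ := hrep m hm
    exact ⟨w, hw, hwm.symm⟩
  · rintro _ ⟨q, ⟨u, v, hq⟩, rfl⟩
    exact ⟨u, v, hq.map T.acyclic T.conn Sum.inl_injective hrep⟩
end

section
/- Let ℓ be a label occurring on more than one leaf of a MUL-tree T, and let T' be the minimal subtree of T spanning all leaves labeled ℓ. Then any leaf of T labeled ℓ that is attached to a pendant node having degree at least three in T' is prunable, i.e., deleting that leaf yields a tree with the same information content as T. -/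
open SimpleGraph

variable {V V' L L' : Type}

/-!
Pruning `v₀` deletes the pendant edge `y v₀` and, if `y` had degree three, then suppresses the
degree-two vertex `y`. Suppressing a degree-two vertex never changes the information content:
the new edge `p q` induces the same label split as `y p` and `y q`. Deleting the pendant edge
changes no split either. The edge `y v₀` itself resolves nothing, since its `v₀`-side carries
only `ℓ = ψ v₀`. For any other edge `(u, v)` with `v₀` on the `u`-side, `y` has two further
neighbours in the subtree spanned by `ℓ`; at most one of their branches contains `v`, so the
other one puts a leaf labelled `ℓ` on the `u`-side, and `ℓ` stays there after `v₀` is gone.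
-/

theorem Set.exists_pair_ne_of_three_le_ncard {α : Type*} {s : Set α} (x : α) (hs : 3 ≤ s.ncard) :
    ∃ a ∈ s, ∃ b ∈ s, a ≠ b ∧ a ≠ x ∧ b ≠ x := by
  have hfin : s.Finite := Set.finite_of_ncard_pos (by omega)
  have h : s.ncard ≤ (s \ {x}).ncard + 1 := by
    refine (Set.ncard_le_ncard ?_ ((hfin.sdiff (t := {x})).insert x)).trans
      (Set.ncard_insert_le _ _)
    rw [Set.insert_sdiff_singleton]
    exact Set.subset_insert x s
  obtain ⟨a, b, ⟨ha, hax⟩, ⟨hb, hbx⟩, hab⟩ :=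
    (Set.one_lt_ncard_iff (hfin.sdiff (t := {x}))).1 (by omega)
  exact ⟨a, ha, b, hb, hab, hax, hbx⟩

namespace SimpleGraph

theorem Reachable.map_of_forall_adj {G : SimpleGraph V} {G' : SimpleGraph V'} (f : V → V')
    (hf : ∀ a b, G.Adj a b → G'.Reachable (f a) (f b)) {a b : V} (h : G.Reachable a b) :
    G'.Reachable (f a) (f b) := by
  obtain ⟨p⟩ := h
  induction p with
  | nil => exact Reachable.refl _
  | cons hab _ ih => exact (hf _ _ hab).trans ih

/-- A `K`-walk between vertices other than `x` is carried to `K'` by sending `x` to `z`. -/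
theorem Reachable.of_reroute {K K' : SimpleGraph V} {x z a b : V}
    (hK : ∀ c d, K.Adj c d → c ≠ x → d ≠ x → K'.Reachable c d)
    (hx : ∀ c, K.Adj x c → K'.Reachable z c)
    (h : K.Reachable a b) (ha : a ≠ x) (hb : b ≠ x) : K'.Reachable a b := by
  classical
  have key := h.map_of_forall_adj (Function.update id x z) fun c d hcd => by
    rcases eq_or_ne c x with rfl | hc
    · simpa [hcd.ne'] using hx d hcd
    rcases eq_or_ne d x with rfl | hd
    · simpa [hc] using (hx c hcd.symm).symm
    · simpa [hc, hd] using hK c d hcd hc hd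
  simpa [ha, hb] using key

end SimpleGraph

open SimpleGraph

section Side

variable {G : SimpleGraph V} {u v w x y r r' : V}

theorem self_mem_side : u ∈ side G u v := Reachable.refl u

theorem mem_side_of_adj (hw : w ∈ side G u v) (hwx : G.Adj w x) (hne : s(w, x) ≠ s(u, v)) :
    x ∈ side G u v :=
  ((deleteEdges_adj.2 ⟨hwx, hne⟩ : (G.deleteEdges {s(u, v)}).Adj w x).symm.reachable).trans hw

theorem notMem_side_of_adj (hG : G.IsAcyclic) (huv : G.Adj u v) : v ∉ side G u v :=
  fun h => isBridge_iff.mp (isAcyclic_iff_forall_adj_isBridge.mp hG huv) h.symm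

theorem reachable_deleteEdges_of_mem_side {s : Set (Sym2 V)}
    (hs : ∀ e ∈ s, ∃ x ∈ e, x ∉ side G u v) (hw : w ∈ side G u v) :
    (G.deleteEdges s).Reachable w u := by
  classical
  obtain ⟨p⟩ := hw
  refine ⟨(p.mapLe (deleteEdges_le _)).toDeleteEdges s fun e he hes => ?_⟩
  rw [Walk.edges_mapLe_eq_edges] at he
  obtain ⟨x, hx, hxs⟩ := hs e hes
  exact hxs ⟨p.dropUntil x (Walk.mem_support_of_mem_edges he hx)⟩

theorem side_disjoint_of_ne (hG : G.IsAcyclic) (hr : G.Adj r y) (hr' : G.Adj r' y) (hne : r ≠ r')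
    (hw : w ∈ side G r y) : w ∉ side G r' y := by
  intro hw'
  have hwr : (G.deleteEdges {s(r', y)}).Reachable w r :=
    reachable_deleteEdges_of_mem_side (by simp [notMem_side_of_adj hG hr]) hw
  refine notMem_side_of_adj hG hr' (mem_side_of_adj (hwr.symm.trans hw') hr ?_)
  simp [hne, hr.ne]

theorem mem_side_of_mem_side_of_notMem_side (hG : G.IsAcyclic) (huv : G.Adj u v)
    (hry : G.Adj r y) (hy : y ∈ side G u v) (hw : w ∈ side G r y) (hv : v ∉ side G r y) :
    w ∈ side G u v := by
  have hwr : (G.deleteEdges {s(u, v)}).Reachable w r :=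
    reachable_deleteEdges_of_mem_side (by simp [hv]) hw
  refine hwr.trans (mem_side_of_adj hy hry.symm ?_)
  rintro he
  rcases Sym2.eq_iff.mp he with ⟨rfl, rfl⟩ | ⟨rfl, rfl⟩
  · exact hv self_mem_side
  · exact notMem_side_of_adj hG huv hy

theorem side_subset_of_neighborSet_eq (hv : G.neighborSet v = {y}) : side G v y ⊆ {v} := by
  intro w hw
  by_contra hwv
  obtain ⟨a, ha⟩ := Reachable.nonempty_neighborSet_right hwv hw
  obtain ⟨hva, hne⟩ := deleteEdges_adj.mp ha
  have : a ∈ ({y} : Set V) := hv ▸ hva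
  rw [Set.mem_singleton_iff] at this
  exact hne (by simp [this])

end Side

section Neighbors

variable {G : SimpleGraph V} {v w y a b : V}

theorem isLeaf_iff : IsLeaf G w ↔ ∃ a, G.neighborSet w = {a} := Set.ncard_eq_one

theorem not_isLeaf_of_adj (ha : G.Adj w a) (hb : G.Adj w b) (hab : a ≠ b) : ¬ IsLeaf G w := by
  intro h
  obtain ⟨c, hc⟩ := isLeaf_iff.1 h
  have ha' : a ∈ G.neighborSet w := ha
  have hb' : b ∈ G.neighborSet w := hb
  rw [hc, Set.mem_singleton_iff] at ha' hb'
  exact hab (ha'.trans hb'.symm)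

theorem eq_of_adj_of_neighborSet_eq (hv : G.neighborSet v = {y}) (h : G.Adj v w) : w = y := by
  have h' : w ∈ G.neighborSet v := h
  rwa [hv, Set.mem_singleton_iff] at h'

theorem adj_of_neighborSet_eq (hv : G.neighborSet v = {y}) : G.Adj v y := by
  simp [← mem_neighborSet, hv]

theorem IsLeaf.neighborSet_eq (h : IsLeaf G v) (hvy : G.Adj v y) : G.neighborSet v = {y} := by
  obtain ⟨c, hc⟩ := isLeaf_iff.1 h
  have hy : y ∈ G.neighborSet v := hvy
  rw [hc, Set.mem_singleton_iff] at hy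
  rw [hc, hy]

theorem eq_or_eq_of_adj_of_neighborSet_eq_pair (hv : G.neighborSet v = {a, b}) (h : G.Adj v w) :
    w = a ∨ w = b := by
  have h' : w ∈ G.neighborSet v := h
  rwa [hv] at h'

theorem adj_of_neighborSet_eq_pair (hv : G.neighborSet v = {a, b}) : G.Adj v a ∧ G.Adj v b := by
  simp [← mem_neighborSet, hv]

theorem neighborSet_deleteEdges_singleton :
    (G.deleteEdges {s(y, v)}).neighborSet y = G.neighborSet y \ {v} := by
  ext c
  simp only [mem_neighborSet, deleteEdges_adj, Set.mem_singleton_iff, Sym2.congr_right,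
    Set.mem_sdiff]

end Neighbors

section Labels

variable {G : SimpleGraph V} {ψ : V → L} {v y r : V}

theorem infoContent_subset_of_forall_adj {G' : SimpleGraph V'} {ψ' : V' → L}
    (h : ∀ u v, G.Adj u v → (Mside G ψ u v).Subsingleton ∨ (Mside G ψ v u).Subsingleton ∨
      ∃ u' v', G'.Adj u' v' ∧ sideLabels G ψ u v = sideLabels G' ψ' u' v' ∧
        sideLabels G ψ v u = sideLabels G' ψ' v' u') :
    infoContent G ψ ⊆ infoContent G' ψ' := by
  rintro _ ⟨u, v, huv, a, b, c, d, hab, hcd, ha, hb, hc, hd, rfl⟩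
  rcases h u v huv with hs | hs | ⟨u', v', huv', h₁, h₂⟩
  · exact (hab (hs ha hb)).elim
  · exact (hcd (hs hc hd)).elim
  · have hM : Mside G ψ u v = Mside G' ψ' u' v' := by simp only [Mside, h₁, h₂]
    have hM' : Mside G ψ v u = Mside G' ψ' v' u' := by simp only [Mside, h₁, h₂]
    exact ⟨u', v', huv', a, b, c, d, hab, hcd, hM ▸ ha, hM ▸ hb, hM' ▸ hc, hM' ▸ hd, rfl⟩

theorem sideLabels_eq_of_mem_side_iff {G' : SimpleGraph V} {u v u' v' : V}
    (hleaf : ∀ w, IsLeaf G' w ↔ IsLeaf G w)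
    (hside : ∀ w, IsLeaf G w → (w ∈ side G' u v ↔ w ∈ side G u' v')) :
    sideLabels G' ψ u v = sideLabels G ψ u' v' := by
  ext m
  constructor
  · rintro ⟨w, hw, hs, rfl⟩
    rw [hleaf] at hw
    exact ⟨w, hw, (hside w hw).1 hs, rfl⟩
  · rintro ⟨w, hw, hs, rfl⟩
    exact ⟨w, (hleaf w).2 hw, (hside w hw).2 hs, rfl⟩

theorem mside_subsingleton_of_neighborSet_eq (hv : G.neighborSet v = {y}) :
    (Mside G ψ v y).Subsingleton := by
  rintro _ ⟨⟨w, -, hw, rfl⟩, -⟩ _ ⟨⟨w', -, hw', rfl⟩, -⟩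
  rw [side_subset_of_neighborSet_eq hv hw, side_subset_of_neighborSet_eq hv hw']

theorem mem_sideLabels_of_mem_spanVerts {ℓ : L} (hr : r ∈ spanVerts G ψ ℓ) :
    ℓ ∈ sideLabels G ψ r y := by
  classical
  obtain ⟨c, d, hc, hd, hcℓ, hdℓ, hcd, hall⟩ := hr
  obtain ⟨W, hW⟩ := hcd.exists_isPath
  have hrW := hall W
  -- the edge `r y` lies on at most one of the two halves of the path `c ⋯ r ⋯ d`
  by_cases hmem : s(r, y) ∈ (W.takeUntil r hrW).edges
  · have hnot : s(r, y) ∉ (W.dropUntil r hrW).edges :=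
      hW.isTrail.disjoint_edges_takeUntil_dropUntil hrW hmem
    refine ⟨d, hd, ⟨((W.dropUntil r hrW).toDeleteEdges {s(r, y)} ?_).reverse⟩, hdℓ⟩
    rintro e he rfl
    exact hnot he
  · refine ⟨c, hc, ⟨(W.takeUntil r hrW).toDeleteEdges {s(r, y)} ?_⟩, hcℓ⟩
    rintro e he rfl
    exact hmem he

end Labels

section PendantEdge

variable {G : SimpleGraph V} {ψ : V → L} {v₀ y u v w r₁ r₂ : V}

theorem deleteEdges_pendant_adj (hv₀ : G.neighborSet v₀ = {y}) {a b : V} :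
    (G.deleteEdges {s(y, v₀)}).Adj a b ↔ G.Adj a b ∧ a ≠ v₀ ∧ b ≠ v₀ := by
  have hnb : ∀ {c}, G.Adj v₀ c → c = y := eq_of_adj_of_neighborSet_eq hv₀
  simp only [deleteEdges_adj, Set.mem_singleton_iff]
  constructor
  · rintro ⟨hab, hne⟩
    refine ⟨hab, ?_, ?_⟩ <;> rintro rfl
    · exact hne (by rw [hnb hab, Sym2.eq_swap])
    · exact hne (by rw [hnb hab.symm])
  · rintro ⟨hab, ha, hb⟩
    refine ⟨hab, fun he => ?_⟩
    rcases Sym2.eq_iff.mp he with ⟨-, rfl⟩ | ⟨rfl, -⟩ <;> contradiction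

theorem isLeaf_deleteEdges_pendant_iff (hv₀ : G.neighborSet v₀ = {y}) (hwy : w ≠ y) :
    IsLeaf (G.deleteEdges {s(y, v₀)}) w ↔ IsLeaf G w ∧ w ≠ v₀ := by
  rcases eq_or_ne w v₀ with rfl | hwv
  · simp only [ne_eq, not_true_eq_false, and_false, iff_false, isLeaf_iff, not_exists]
    intro a ha
    have : a ∈ (G.deleteEdges {s(y, w)}).neighborSet w := ha ▸ rfl
    exact ((deleteEdges_pendant_adj hv₀).1 this).2.1 rfl
  · have : (G.deleteEdges {s(y, v₀)}).neighborSet w = G.neighborSet w := by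
      ext a
      simp only [mem_neighborSet, deleteEdges_pendant_adj hv₀]
      refine ⟨fun h => h.1, fun h => ⟨h, hwv, ?_⟩⟩
      rintro rfl
      exact hwy (eq_of_adj_of_neighborSet_eq hv₀ h.symm)
    simp [IsLeaf, deg, this, hwv]

theorem mem_side_deleteEdges_pendant_iff (hv₀ : G.neighborSet v₀ = {y})
    (huv : (G.deleteEdges {s(y, v₀)}).Adj u v) (hw : w ≠ v₀) :
    w ∈ side (G.deleteEdges {s(y, v₀)}) u v ↔ w ∈ side G u v := by
  obtain ⟨-, hu, -⟩ := (deleteEdges_pendant_adj hv₀).1 huv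
  refine ⟨fun h => h.mono ?_, fun h => h.of_reroute (x := v₀) (z := y) ?_ ?_ hw hu⟩
  · rw [deleteEdges_deleteEdges]
    exact deleteEdges_anti Set.subset_union_right
  · intro c d hcd hc hd
    rw [deleteEdges_adj] at hcd
    exact Adj.reachable (deleteEdges_adj.2 ⟨(deleteEdges_pendant_adj hv₀).2 ⟨hcd.1, hc, hd⟩, hcd.2⟩)
  · intro c hc
    rw [eq_of_adj_of_neighborSet_eq hv₀ (deleteEdges_adj.1 hc).1]

theorem label_mem_sideLabels_deleteEdges_pendant (hG : G.IsAcyclic)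
    (hv₀ : G.neighborSet v₀ = {y}) (hr₁ : G.Adj r₁ y) (hr₂ : G.Adj r₂ y) (h12 : r₁ ≠ r₂)
    (hr₁v : r₁ ≠ v₀) (hr₂v : r₂ ≠ v₀)
    (hℓ₁ : ψ v₀ ∈ sideLabels G ψ r₁ y) (hℓ₂ : ψ v₀ ∈ sideLabels G ψ r₂ y)
    (huv : (G.deleteEdges {s(y, v₀)}).Adj u v) (hv₀uv : v₀ ∈ side G u v) :
    ψ v₀ ∈ sideLabels (G.deleteEdges {s(y, v₀)}) ψ u v := by
  obtain ⟨huvG, hu, hv⟩ := (deleteEdges_pendant_adj hv₀).1 huv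
  have hv₀y : G.Adj v₀ y := adj_of_neighborSet_eq hv₀
  have hy : y ∈ side G u v := mem_side_of_adj hv₀uv hv₀y (by simp [hu.symm, hv.symm])
  -- the branches at `r₁` and `r₂` are disjoint, so one of them misses `v`
  obtain ⟨r, hr, hrv, ⟨c, hc, hcs, hcℓ⟩, hvr⟩ : ∃ r, G.Adj r y ∧ r ≠ v₀ ∧
      ψ v₀ ∈ sideLabels G ψ r y ∧ v ∉ side G r y := by
    by_cases h : v ∈ side G r₁ y
    · exact ⟨r₂, hr₂, hr₂v, hℓ₂, side_disjoint_of_ne hG hr₁ hr₂ h12 h⟩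
    · exact ⟨r₁, hr₁, hr₁v, hℓ₁, h⟩
  have hcv : c ≠ v₀ := by
    rintro rfl
    exact notMem_side_of_adj hG hr (mem_side_of_adj hcs hv₀y (by simp [hrv.symm, hv₀y.ne]))
  have hcy : c ≠ y := by
    rintro rfl
    exact not_isLeaf_of_adj hr₁.symm hr₂.symm h12 hc
  exact ⟨c, (isLeaf_deleteEdges_pendant_iff hv₀ hcy).2 ⟨hc, hcv⟩,
    (mem_side_deleteEdges_pendant_iff hv₀ huv hcv).2
      (mem_side_of_mem_side_of_notMem_side hG huvG hr hy hcs hvr), hcℓ⟩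

theorem sideLabels_deleteEdges_pendant (hG : G.IsAcyclic)
    (hv₀ : G.neighborSet v₀ = {y}) (hr₁ : G.Adj r₁ y) (hr₂ : G.Adj r₂ y) (h12 : r₁ ≠ r₂)
    (hr₁v : r₁ ≠ v₀) (hr₂v : r₂ ≠ v₀)
    (hℓ₁ : ψ v₀ ∈ sideLabels G ψ r₁ y) (hℓ₂ : ψ v₀ ∈ sideLabels G ψ r₂ y)
    (huv : (G.deleteEdges {s(y, v₀)}).Adj u v) :
    sideLabels (G.deleteEdges {s(y, v₀)}) ψ u v = sideLabels G ψ u v := by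
  have hleaf : ∀ w, IsLeaf (G.deleteEdges {s(y, v₀)}) w ↔ IsLeaf G w ∧ w ≠ v₀ := by
    intro w
    rcases eq_or_ne w y with rfl | hwy
    · have hwv : w ≠ v₀ := (adj_of_neighborSet_eq hv₀).ne'
      have hD₁ := (deleteEdges_pendant_adj hv₀).2 ⟨hr₁.symm, hwv, hr₁v⟩
      have hD₂ := (deleteEdges_pendant_adj hv₀).2 ⟨hr₂.symm, hwv, hr₂v⟩
      simp [not_isLeaf_of_adj hD₁ hD₂ h12, not_isLeaf_of_adj hr₁.symm hr₂.symm h12]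
    · exact isLeaf_deleteEdges_pendant_iff hv₀ hwy
  ext m
  constructor
  · rintro ⟨w, hw, hws, rfl⟩
    obtain ⟨hw, hwv⟩ := (hleaf w).1 hw
    exact ⟨w, hw, (mem_side_deleteEdges_pendant_iff hv₀ huv hwv).1 hws, rfl⟩
  · rintro ⟨w, hw, hws, rfl⟩
    rcases eq_or_ne w v₀ with rfl | hwv
    · exact label_mem_sideLabels_deleteEdges_pendant hG hv₀ hr₁ hr₂ h12 hr₁v hr₂v hℓ₁ hℓ₂ huv hws
    · exact ⟨w, (hleaf w).2 ⟨hw, hwv⟩, (mem_side_deleteEdges_pendant_iff hv₀ huv hwv).2 hws, rfl⟩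

theorem infoContent_deleteEdges_pendant_eq (hG : G.IsAcyclic)
    (hv₀ : G.neighborSet v₀ = {y}) (hr₁ : G.Adj r₁ y) (hr₂ : G.Adj r₂ y) (h12 : r₁ ≠ r₂)
    (hr₁v : r₁ ≠ v₀) (hr₂v : r₂ ≠ v₀)
    (hℓ₁ : ψ v₀ ∈ sideLabels G ψ r₁ y) (hℓ₂ : ψ v₀ ∈ sideLabels G ψ r₂ y) :
    infoContent (G.deleteEdges {s(y, v₀)}) ψ = infoContent G ψ := by
  set D := G.deleteEdges {s(y, v₀)}
  have hlabels : ∀ {u v}, D.Adj u v → sideLabels D ψ u v = sideLabels G ψ u v :=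
    sideLabels_deleteEdges_pendant hG hv₀ hr₁ hr₂ h12 hr₁v hr₂v hℓ₁ hℓ₂
  apply subset_antisymm
  · exact infoContent_subset_of_forall_adj fun u v huv =>
      Or.inr (Or.inr ⟨u, v, (deleteEdges_le _) huv, hlabels huv, hlabels huv.symm⟩)
  · refine infoContent_subset_of_forall_adj fun u v huv => ?_
    by_cases hD : D.Adj u v
    · exact Or.inr (Or.inr ⟨u, v, hD, (hlabels hD).symm, (hlabels hD.symm).symm⟩)
    have : u = v₀ ∨ v = v₀ := by
      by_contra! h
      exact hD ((deleteEdges_pendant_adj hv₀).2 ⟨huv, h.1, h.2⟩)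
    rcases this with rfl | rfl
    · rw [eq_of_adj_of_neighborSet_eq hv₀ huv]
      exact Or.inl (mside_subsingleton_of_neighborSet_eq hv₀)
    · rw [eq_of_adj_of_neighborSet_eq hv₀ huv.symm]
      exact Or.inr (Or.inl (mside_subsingleton_of_neighborSet_eq hv₀))

end PendantEdge

def suppressVertex (G : SimpleGraph V) (y p q : V) : SimpleGraph V :=
  G.deleteEdges {s(y, p), s(y, q)} ⊔ fromEdgeSet {s(p, q)}

section Suppress

variable {G : SimpleGraph V} {ψ : V → L} {y p q u v w : V}

theorem suppressVertex_comm : suppressVertex G y p q = suppressVertex G y q p := by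
  simp only [suppressVertex, Set.pair_comm, Sym2.eq_swap]

theorem suppressVertex_adj (hy : G.neighborSet y = {p, q}) (hpq : p ≠ q) {a b : V} :
    (suppressVertex G y p q).Adj a b ↔ (G.Adj a b ∧ a ≠ y ∧ b ≠ y) ∨ s(a, b) = s(p, q) := by
  simp only [suppressVertex, sup_adj, deleteEdges_adj, fromEdgeSet_adj, Set.mem_insert_iff,
    Set.mem_singleton_iff, not_or]
  refine or_congr ⟨fun ⟨hab, hp, hq⟩ => ⟨hab, ?_, ?_⟩, fun ⟨hab, ha, hb⟩ => ⟨hab, ?_, ?_⟩⟩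
    ⟨And.left, fun h => ⟨h, ?_⟩⟩
  · rintro rfl
    rcases eq_or_eq_of_adj_of_neighborSet_eq_pair hy hab with rfl | rfl <;> simp_all
  · rintro rfl
    rcases eq_or_eq_of_adj_of_neighborSet_eq_pair hy hab.symm with rfl | rfl <;>
      simp_all [Sym2.eq_swap]
  · simp [ha, hb]
  · simp [ha, hb]
  · rintro rfl
    rcases Sym2.eq_iff.mp h with ⟨rfl, rfl⟩ | ⟨rfl, rfl⟩ <;> exact hpq rfl

theorem not_adj_of_neighborSet_eq_pair (hG : G.IsAcyclic) (hy : G.neighborSet y = {p, q})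
    (hpq : p ≠ q) : ¬ G.Adj p q := by
  intro h
  obtain ⟨hyp, hyq⟩ := adj_of_neighborSet_eq_pair hy
  refine notMem_side_of_adj hG hyp.symm (mem_side_of_adj (mem_side_of_adj self_mem_side h ?_)
    hyq.symm ?_)
  all_goals simp [hyp.ne', hyq.ne', hpq.symm]

theorem neighborSet_suppressVertex_self (hy : G.neighborSet y = {p, q}) (hpq : p ≠ q) :
    (suppressVertex G y p q).neighborSet y = ∅ := by
  obtain ⟨hyp, hyq⟩ := adj_of_neighborSet_eq_pair hy
  refine Set.eq_empty_of_forall_notMem fun c hc => ?_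
  rcases (suppressVertex_adj hy hpq).1 hc with ⟨-, h, -⟩ | h
  · exact h rfl
  · rcases Sym2.eq_iff.1 h with ⟨h, -⟩ | ⟨h, -⟩
    exacts [hyp.ne h, hyq.ne h]

theorem neighborSet_suppressVertex_left (hy : G.neighborSet y = {p, q}) (hpq : p ≠ q) :
    (suppressVertex G y p q).neighborSet p = insert q (G.neighborSet p \ {y}) := by
  have hpy : p ≠ y := (adj_of_neighborSet_eq_pair hy).1.ne'
  ext b
  simp only [mem_neighborSet, suppressVertex_adj hy hpq, Set.mem_insert_iff, Set.mem_sdiff,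
    Set.mem_singleton_iff, Sym2.congr_right]
  tauto

theorem neighborSet_suppressVertex_of_ne (hy : G.neighborSet y = {p, q}) (hpq : p ≠ q)
    (hwy : w ≠ y) (hwp : w ≠ p) (hwq : w ≠ q) :
    (suppressVertex G y p q).neighborSet w = G.neighborSet w := by
  ext b
  simp only [mem_neighborSet, suppressVertex_adj hy hpq]
  refine ⟨?_, fun h => Or.inl ⟨h, hwy, ?_⟩⟩
  · rintro (⟨h, -⟩ | h)
    · exact h
    · rcases Sym2.eq_iff.1 h with ⟨rfl, -⟩ | ⟨rfl, -⟩ <;> contradiction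
  · rintro rfl
    rcases eq_or_eq_of_adj_of_neighborSet_eq_pair hy h.symm with rfl | rfl <;> contradiction

theorem isLeaf_suppressVertex_iff (hy : G.neighborSet y = {p, q}) (hpq : p ≠ q)
    (hnpq : ¬ G.Adj p q) : IsLeaf (suppressVertex G y p q) w ↔ IsLeaf G w := by
  -- at `p` the neighbour `y` is exchanged for `q`
  have hleft : ∀ {p q}, G.neighborSet y = {p, q} → p ≠ q → ¬ G.Adj p q →
      (IsLeaf (suppressVertex G y p q) p ↔ IsLeaf G p) := by
    intro p q hy hpq hnpq
    rw [IsLeaf, IsLeaf, deg, deg, neighborSet_suppressVertex_left hy hpq,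
      Set.ncard_exchange (s := G.neighborSet p) hnpq (adj_of_neighborSet_eq_pair hy).1.symm]
  obtain ⟨hyp, hyq⟩ := adj_of_neighborSet_eq_pair hy
  rcases eq_or_ne w y with rfl | hwy
  · refine iff_of_false (fun h => ?_) (not_isLeaf_of_adj hyp hyq hpq)
    simp [IsLeaf, deg, neighborSet_suppressVertex_self hy hpq] at h
  rcases eq_or_ne w p with rfl | hwp
  · exact hleft hy hpq hnpq
  rcases eq_or_ne w q with rfl | hwq
  · rw [suppressVertex_comm]
    exact hleft (Set.pair_comm p w ▸ hy) hpq.symm fun h => hnpq h.symm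
  simp only [IsLeaf, deg, neighborSet_suppressVertex_of_ne hy hpq hwy hwp hwq]

theorem mem_side_suppressVertex_iff (hy : G.neighborSet y = {p, q}) (hpq : p ≠ q)
    (huv : (suppressVertex G y p q).Adj u v) (hne : s(u, v) ≠ s(p, q)) (hw : w ≠ y) :
    w ∈ side (suppressVertex G y p q) u v ↔ w ∈ side G u v := by
  obtain ⟨hyp, hyq⟩ := adj_of_neighborSet_eq_pair hy
  obtain ⟨-, hu, hv⟩ := ((suppressVertex_adj hy hpq).1 huv).resolve_right hne
  have hy_del : ∀ {c}, G.Adj y c → (G.deleteEdges {s(u, v)}).Adj y c := fun h =>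
    deleteEdges_adj.2 ⟨h, by simp [hu.symm, hv.symm]⟩
  constructor
  · refine fun h => h.of_reroute (x := y) (z := y) (fun c d hcd _ _ => ?_) (fun c hc => ?_) hw hu
    · obtain ⟨hcd, hne'⟩ := deleteEdges_adj.1 hcd
      rcases (suppressVertex_adj hy hpq).1 hcd with ⟨hcd, -, -⟩ | he
      · exact (deleteEdges_adj.2 ⟨hcd, hne'⟩).reachable
      · have hpq' : (G.deleteEdges {s(u, v)}).Reachable p q :=
          (hy_del hyp).symm.reachable.trans (hy_del hyq).reachable
        rcases Sym2.eq_iff.1 he with ⟨rfl, rfl⟩ | ⟨rfl, rfl⟩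
        exacts [hpq', hpq'.symm]
    · have hc' : c ∈ (suppressVertex G y p q).neighborSet y := (deleteEdges_adj.1 hc).1
      simp [neighborSet_suppressVertex_self hy hpq] at hc'
  · refine fun h => h.of_reroute (x := y) (z := p) (fun c d hcd hc hd => ?_) (fun c hc => ?_) hw hu
    · obtain ⟨hcd, hne'⟩ := deleteEdges_adj.1 hcd
      exact (deleteEdges_adj.2
        ⟨(suppressVertex_adj hy hpq).2 (Or.inl ⟨hcd, hc, hd⟩), hne'⟩).reachable
    · rcases eq_or_eq_of_adj_of_neighborSet_eq_pair hy (deleteEdges_adj.1 hc).1 with rfl | rfl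
      · rfl
      · refine (deleteEdges_adj.2 ⟨(suppressVertex_adj hy hpq).2 (Or.inr rfl), ?_⟩).reachable
        simpa using hne.symm

theorem mem_side_suppressVertex_self_iff (hG : G.IsAcyclic) (hy : G.neighborSet y = {p, q})
    (hpq : p ≠ q) (hw : w ≠ y) :
    w ∈ side (suppressVertex G y p q) p q ↔ w ∈ side G p y := by
  have hyp : G.Adj y p := (adj_of_neighborSet_eq_pair hy).1
  have hnpq := not_adj_of_neighborSet_eq_pair hG hy hpq
  constructor
  · refine fun h => h.of_reroute (x := y) (z := y) (fun c d hcd hc hd => ?_) (fun c hc => ?_) hw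
      hyp.ne'
    · obtain ⟨hcd, hne⟩ := deleteEdges_adj.1 hcd
      rcases (suppressVertex_adj hy hpq).1 hcd with ⟨hcd, -, -⟩ | he
      · exact (deleteEdges_adj.2 ⟨hcd, by simp [hc, hd]⟩).reachable
      · exact (hne he).elim
    · have hc' : c ∈ (suppressVertex G y p q).neighborSet y := (deleteEdges_adj.1 hc).1
      simp [neighborSet_suppressVertex_self hy hpq] at hc'
  · refine fun h => h.of_reroute (x := y) (z := q) (fun c d hcd hc hd => ?_) (fun c hc => ?_) hw
      hyp.ne'
    · obtain ⟨hcdG, -⟩ := deleteEdges_adj.1 hcd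
      refine (deleteEdges_adj.2
        ⟨(suppressVertex_adj hy hpq).2 (Or.inl ⟨hcdG, hc, hd⟩), ?_⟩).reachable
      rintro he
      rcases Sym2.eq_iff.1 he with ⟨rfl, rfl⟩ | ⟨rfl, rfl⟩
      exacts [hnpq hcdG, hnpq hcdG.symm]
    · obtain ⟨hc, hne⟩ := deleteEdges_adj.1 hc
      rcases eq_or_eq_of_adj_of_neighborSet_eq_pair hy hc with rfl | rfl
      · exact (hne (by simp [Sym2.eq_swap])).elim
      · rfl

theorem mem_side_iff_of_neighborSet_eq_pair (hy : G.neighborSet y = {p, q}) (hpq : p ≠ q)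
    (hw : w ≠ y) : w ∈ side G y p ↔ w ∈ side G q y := by
  have hyq : G.Adj y q := (adj_of_neighborSet_eq_pair hy).2
  have hqy : (G.deleteEdges {s(y, p)}).Adj q y :=
    deleteEdges_adj.2 ⟨hyq.symm, by simp [hpq.symm, hyq.ne']⟩
  constructor
  · refine fun h => (h.trans hqy.symm.reachable).of_reroute (x := y) (z := q)
      (fun c d hcd hc hd => ?_) (fun c hc => ?_) hw hyq.ne'
    · exact (deleteEdges_adj.2 ⟨(deleteEdges_adj.1 hcd).1, by simp [hc, hd]⟩).reachable
    · obtain ⟨hc, hne⟩ := deleteEdges_adj.1 hc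
      rcases eq_or_eq_of_adj_of_neighborSet_eq_pair hy hc with rfl | rfl
      · exact (hne rfl).elim
      · rfl
  · refine fun h => (h.of_reroute (x := y) (z := p) (fun c d hcd hc hd => ?_) (fun c hc => ?_) hw
      hyq.ne').trans hqy.reachable
    · exact (deleteEdges_adj.2 ⟨(deleteEdges_adj.1 hcd).1, by simp [hc, hd]⟩).reachable
    · obtain ⟨hc, hne⟩ := deleteEdges_adj.1 hc
      rcases eq_or_eq_of_adj_of_neighborSet_eq_pair hy hc with rfl | rfl
      · rfl
      · exact (hne (by simp [Sym2.eq_swap])).elim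

theorem sideLabels_suppressVertex_self (hG : G.IsAcyclic) (hy : G.neighborSet y = {p, q})
    (hpq : p ≠ q) :
    sideLabels (suppressVertex G y p q) ψ p q = sideLabels G ψ p y ∧
      sideLabels (suppressVertex G y p q) ψ q p = sideLabels G ψ y p := by
  obtain ⟨hyp, hyq⟩ := adj_of_neighborSet_eq_pair hy
  have hleaf : ∀ w, IsLeaf (suppressVertex G y p q) w ↔ IsLeaf G w := fun _ =>
    isLeaf_suppressVertex_iff hy hpq (not_adj_of_neighborSet_eq_pair hG hy hpq)
  have hne : ∀ {w}, IsLeaf G w → w ≠ y := by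
    rintro w hw rfl
    exact not_isLeaf_of_adj hyp hyq hpq hw
  have hy' : G.neighborSet y = {q, p} := by rw [hy, Set.pair_comm]
  refine ⟨sideLabels_eq_of_mem_side_iff hleaf fun w hw =>
    mem_side_suppressVertex_self_iff hG hy hpq (hne hw), ?_⟩
  rw [suppressVertex_comm, sideLabels_eq_of_mem_side_iff (v' := y) (by rwa [← suppressVertex_comm])
    fun w hw => mem_side_suppressVertex_self_iff hG hy' hpq.symm (hne hw)]
  exact sideLabels_eq_of_mem_side_iff (fun _ => Iff.rfl) fun w hw =>
    (mem_side_iff_of_neighborSet_eq_pair hy hpq (hne hw)).symm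

theorem sideLabels_suppressVertex (hy : G.neighborSet y = {p, q}) (hpq : p ≠ q)
    (hnpq : ¬ G.Adj p q) (huv : (suppressVertex G y p q).Adj u v) (hne : s(u, v) ≠ s(p, q)) :
    sideLabels (suppressVertex G y p q) ψ u v = sideLabels G ψ u v := by
  obtain ⟨hyp, hyq⟩ := adj_of_neighborSet_eq_pair hy
  refine sideLabels_eq_of_mem_side_iff (fun _ => isLeaf_suppressVertex_iff hy hpq hnpq)
    fun w hw => mem_side_suppressVertex_iff hy hpq huv hne ?_
  rintro rfl
  exact not_isLeaf_of_adj hyp hyq hpq hw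

theorem infoContent_suppressVertex_eq (hG : G.IsAcyclic) (hy : G.neighborSet y = {p, q})
    (hpq : p ≠ q) : infoContent (suppressVertex G y p q) ψ = infoContent G ψ := by
  set G' := suppressVertex G y p q
  have hnpq := not_adj_of_neighborSet_eq_pair hG hy hpq
  have hy' : G.neighborSet y = {q, p} := by rw [hy, Set.pair_comm]
  have hpq' : G'.Adj p q := (suppressVertex_adj hy hpq).2 (Or.inr rfl)
  obtain ⟨hyp, hyq⟩ := adj_of_neighborSet_eq_pair hy
  obtain ⟨hp₁, hp₂⟩ := sideLabels_suppressVertex_self (ψ := ψ) hG hy hpq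
  obtain ⟨hq₁, hq₂⟩ := sideLabels_suppressVertex_self (ψ := ψ) hG hy' hpq.symm
  rw [← suppressVertex_comm] at hq₁ hq₂
  have hlabels : ∀ {u v}, G'.Adj u v → s(u, v) ≠ s(p, q) →
      sideLabels G' ψ u v = sideLabels G ψ u v := sideLabels_suppressVertex hy hpq hnpq
  apply subset_antisymm
  · refine infoContent_subset_of_forall_adj fun u v huv => Or.inr (Or.inr ?_)
    by_cases hne : s(u, v) = s(p, q)
    · rcases Sym2.eq_iff.1 hne with ⟨rfl, rfl⟩ | ⟨rfl, rfl⟩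
      · exact ⟨u, y, hyp.symm, hp₁, hp₂⟩
      · exact ⟨u, y, hyq.symm, hq₁, hq₂⟩
    · have hG : G.Adj u v := (((suppressVertex_adj hy hpq).1 huv).resolve_right hne).1
      exact ⟨u, v, hG, hlabels huv hne, hlabels huv.symm (by rwa [Sym2.eq_swap])⟩
  · refine infoContent_subset_of_forall_adj fun u v huv => Or.inr (Or.inr ?_)
    by_cases hu : u = y
    · subst hu
      rcases eq_or_eq_of_adj_of_neighborSet_eq_pair hy huv with rfl | rfl
      exacts [⟨q, v, hpq'.symm, hp₂.symm, hp₁.symm⟩, ⟨p, v, hpq', hq₂.symm, hq₁.symm⟩]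
    by_cases hv : v = y
    · subst hv
      rcases eq_or_eq_of_adj_of_neighborSet_eq_pair hy huv.symm with rfl | rfl
      exacts [⟨u, q, hpq', hp₁.symm, hp₂.symm⟩, ⟨u, p, hpq'.symm, hq₁.symm, hq₂.symm⟩]
    have hne : s(u, v) ≠ s(p, q) := by
      rintro he
      rcases Sym2.eq_iff.1 he with ⟨rfl, rfl⟩ | ⟨rfl, rfl⟩
      exacts [hnpq huv, hnpq huv.symm]
    have huv' : G'.Adj u v := (suppressVertex_adj hy hpq).2 (Or.inl ⟨huv, hu, hv⟩)
    exact ⟨u, v, huv', (hlabels huv' hne).symm,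
      (hlabels huv'.symm (by rwa [Sym2.eq_swap])).symm⟩

end Suppress

theorem stmt14_general (T : MulTree V L) (ℓ : L)
    (v₀ y : V) (hv₀ : IsLeaf T.G v₀) (hψ : T.ψ v₀ = ℓ) (hadj : T.G.Adj y v₀)
    (hdeg : 3 ≤ degIn T.G (spanVerts T.G T.ψ ℓ) y) :
    Prunable T.G T.ψ v₀ := by
  have : Finite V := T.fin
  have hnb : T.G.neighborSet v₀ = {y} := hv₀.neighborSet_eq hadj.symm
  obtain ⟨r₁, ⟨hr₁, hs₁⟩, r₂, ⟨hr₂, hs₂⟩, h12, hr₁v, hr₂v⟩ :=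
    Set.exists_pair_ne_of_three_le_ncard v₀ hdeg
  subst hψ
  have hD := infoContent_deleteEdges_pendant_eq T.acyclic hnb hr₁.symm hr₂.symm h12 hr₁v hr₂v
    (mem_sideLabels_of_mem_spanVerts hs₁) (mem_sideLabels_of_mem_spanVerts hs₂)
  refine ⟨hv₀, ?_⟩
  by_cases h3 : deg T.G y = 3
  · have hy : T.G.neighborSet y = {v₀, r₁, r₂} := by
      refine (Set.eq_of_subset_of_ncard_le ?_ ?_).symm
      · simp [Set.insert_subset_iff, hadj, hr₁, hr₂]
      · rw [Set.ncard_insert_of_notMem (by simp [hr₁v.symm, hr₂v.symm]), Set.ncard_pair h12]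
        exact h3.le
    have hyD : (T.G.deleteEdges {s(y, v₀)}).neighborSet y = {r₁, r₂} := by
      rw [neighborSet_deleteEdges_singleton, hy,
        Set.insert_sdiff_self_of_notMem (by simp [hr₁v.symm, hr₂v.symm])]
    refine ⟨suppressVertex (T.G.deleteEdges {s(y, v₀)}) y r₁ r₂,
      ⟨y, hnb, Or.inr ⟨h3, r₁, r₂, h12, hr₁v, hr₂v, hy, ?_⟩⟩, ?_⟩
    · rw [suppressVertex, deleteEdges_deleteEdges, Set.singleton_union]
    · rw [infoContent_suppressVertex_eq (T.acyclic.anti (deleteEdges_le _)) hyD h12, hD]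
  · exact ⟨_, ⟨y, hnb, Or.inl ⟨h3, rfl⟩⟩, hD⟩

/-- Let `ℓ` be a label occurring on more than one leaf of `T`, and
let `T'` be the minimal subtree of `T` spanning all leaves labeled `ℓ`. Any leaf
labeled `ℓ` attached to a pendant node having degree at least three in `T'` is
prunable. -/
theorem stmt14 (T : MulTree V L) (ℓ : L)
    (c₁ c₂ : V) (hc₁ : IsLeaf T.G c₁) (hc₂ : IsLeaf T.G c₂) (hne : c₁ ≠ c₂)
    (hl₁ : T.ψ c₁ = ℓ) (hl₂ : T.ψ c₂ = ℓ)
    (v₀ y : V) (hv₀ : IsLeaf T.G v₀) (hψ : T.ψ v₀ = ℓ) (hadj : T.G.Adj y v₀)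
    (hdeg : 3 ≤ degIn T.G (spanVerts T.G T.ψ ℓ) y) :
    Prunable T.G T.ψ v₀ :=
  stmt14_general T ℓ v₀ y hv₀ hψ hadj hdeg
end
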